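/- Let u be a nonconstant inner function and let φ ∈ L∞(𝕋) satisfy |φ| = 1 a.e. Then: (1) if φ = ψ̄ for some ψ ∈ H∞, then m(D_φ) = √(1 − ‖T_{ūψ}|_{K_u}‖²); (2) if T_{\overline{uφ}} f = 0 for every f ∈ K_u, then m(D_φ) = √(1 − ‖H_{φ̄}|_{K_u}‖²); (3) if there exists a unit vector f₀ ∈ K_u with ‖T_{\overline{uφ}} f₀‖ = ‖T_{\overline{uφ}}|_{K_u}‖ and ‖H_{φ̄} f₀‖ = ‖H_{φ̄}|_{K_u}‖, then m(D_φ) = √( 1 − (‖T_{\overline{uφ}}|_{K_u}‖² + ‖H_{φ̄}|_{K_u}‖²) ). -/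

import Mathlib

open MeasureTheory Complex
open scoped InnerProductSpace ENNReal

noncomputable section

namespace DTTO

instance fact2pi : Fact (0 < 2 * Real.pi) := ⟨by positivity⟩

/-- The circle, realized as `ℝ / 2πℤ`. -/
abbrev 𝕋c := AddCircle (2 * Real.pi)

/-- Normalized Haar (Lebesgue) measure on the circle. -/
abbrev μT : Measure 𝕋c := AddCircle.haarAddCircle

/-- `L²(𝕋)`. -/
abbrev L2 := Lp ℂ 2 μT

/-- `L∞(𝕋)`. -/
abbrev Linf := Lp ℂ ⊤ μT

lemma memL2_smul (φ : Linf) (f : L2) : MemLp (⇑φ • ⇑f) 2 μT :=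
  (Lp.memLp f).smul (Lp.memLp φ)

/-- Multiplication operator `M_φ : L² → L²` by a function `φ ∈ L∞`. -/
def Mmul (φ : Linf) : L2 →L[ℂ] L2 :=
  LinearMap.mkContinuous
    { toFun := fun f => (memL2_smul φ f).toLp _
      map_add' := fun f g => by
        refine Lp.ext ?_
        filter_upwards [MemLp.coeFn_toLp (memL2_smul φ (f + g)),
          MemLp.coeFn_toLp (memL2_smul φ f), MemLp.coeFn_toLp (memL2_smul φ g),
          Lp.coeFn_add f g,
          Lp.coeFn_add ((memL2_smul φ f).toLp _) ((memL2_smul φ g).toLp _)] with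
            x h1 h2 h3 h4 h5
        rw [h1, h5]
        simp only [Pi.add_apply, h2, h3]
        simp only [Pi.smul_apply', h4, Pi.add_apply, smul_add]
      map_smul' := fun c f => by
        refine Lp.ext ?_
        filter_upwards [MemLp.coeFn_toLp (memL2_smul φ (c • f)),
          MemLp.coeFn_toLp (memL2_smul φ f),
          Lp.coeFn_smul c f,
          Lp.coeFn_smul c ((memL2_smul φ f).toLp _)] with x h1 h2 h3 h4
        rw [h1, RingHom.id_apply, h4]
        simp only [Pi.smul_apply, Pi.smul_apply', h2, h3]
        exact smul_comm _ _ _ }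
    ‖φ‖ (fun f => by
      simp only [LinearMap.coe_mk, AddHom.coe_mk]
      rw [Lp.norm_toLp, Lp.norm_def, Lp.norm_def]
      rw [← ENNReal.toReal_mul]
      refine ENNReal.toReal_mono ?_ ?_
      · exact ENNReal.mul_ne_top (Lp.eLpNorm_ne_top φ) (Lp.eLpNorm_ne_top f)
      · exact eLpNorm_smul_le_eLpNorm_top_mul_eLpNorm 2 (Lp.aestronglyMeasurable f) ⇑φ)

/-- The canonical inclusion `L∞ ⊆ L²` (the measure is finite). -/
def toL2 (φ : Linf) : L2 := ((Lp.memLp φ).mono_exponent le_top).toLp _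

/-- The Hardy space `H²`, the closed linear span in `L²` of the exponentials `e_n`, `n ≥ 0`. -/
def H2 : Submodule ℂ L2 :=
  (Submodule.span ℂ (Set.range fun n : ℕ => (fourierLp 2 (n : ℤ) : L2))).topologicalClosure

instance : CompleteSpace H2 := (Submodule.isClosed_topologicalClosure _).completeSpace_coe

/-- `H²₋ = L² ⊖ H²`. -/
def Hminus : Submodule ℂ L2 := H2ᗮ

instance : CompleteSpace Hminus := (Submodule.isClosed_orthogonal _).completeSpace_coe

/-- `H∞ = H² ∩ L∞`. -/
def MemHinf (φ : Linf) : Prop := toL2 φ ∈ H2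

/-- An inner function: an element of `H² ∩ L∞` of modulus one a.e. -/
structure IsInnerFn (u : Linf) : Prop where
  memH2 : MemHinf u
  unimod : ∀ᵐ z ∂μT, ‖u z‖ = 1

/-- `u` is nonconstant (not a.e. equal to a constant). -/
def Nonconst (u : Linf) : Prop := ¬ ∃ c : ℂ, (⇑u : 𝕋c → ℂ) =ᵐ[μT] fun _ => c

/-- The subspace `uH²` of `L²`. -/
def uH2 (u : Linf) : Submodule ℂ L2 := H2.map (Mmul u).toLinearMap

/-- The model space `K_u = H² ⊖ uH² = H² ∩ (uH²)ᗮ`. -/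
def Ku (u : Linf) : Submodule ℂ L2 := H2 ⊓ (uH2 u)ᗮ

lemma isClosed_Ku (u : Linf) : IsClosed ((Ku u : Set L2)) := by
  have h : (Ku u : Set L2) = (H2 : Set L2) ∩ ((uH2 u)ᗮ : Set L2) := rfl
  rw [h]
  exact (Submodule.isClosed_topologicalClosure _).inter (Submodule.isClosed_orthogonal _)

instance (u : Linf) : CompleteSpace (Ku u) := (isClosed_Ku u).completeSpace_coe

/-- `K_u^⊥ = L² ⊖ K_u`. -/
def KuP (u : Linf) : Submodule ℂ L2 := (Ku u)ᗮ

instance (u : Linf) : CompleteSpace (KuP u) := (Submodule.isClosed_orthogonal _).completeSpace_coe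

/-- Dual truncated Toeplitz operator `D_φ` on `K_u^⊥`. -/
def Dop (u φ : Linf) : KuP u →L[ℂ] KuP u :=
  (KuP u).orthogonalProjectionOnto ∘L Mmul φ ∘L (KuP u).subtypeL

/-- Truncated Toeplitz operator `A_φ` on `K_u`. -/
def Aop (u φ : Linf) : Ku u →L[ℂ] Ku u :=
  (Ku u).orthogonalProjectionOnto ∘L Mmul φ ∘L (Ku u).subtypeL

/-- The operator `B_φ : K_u → K_u^⊥`, `B_φ f = (I - P_{K_u})(φ f)`. -/
def Bop (u φ : Linf) : Ku u →L[ℂ] KuP u :=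
  (KuP u).orthogonalProjectionOnto ∘L Mmul φ ∘L (Ku u).subtypeL

/-- Toeplitz operator `T_φ : H² → H²`. -/
def Top (φ : Linf) : H2 →L[ℂ] H2 :=
  H2.orthogonalProjectionOnto ∘L Mmul φ ∘L H2.subtypeL

/-- Hankel operator `H_φ : H² → H²₋`. -/
def Hop (φ : Linf) : H2 →L[ℂ] Hminus :=
  Hminus.orthogonalProjectionOnto ∘L Mmul φ ∘L H2.subtypeL

/-- The exponential `e₁(ζ) = ζ` as an element of `L∞`. -/
def e1 : Linf := fourierLp ⊤ 1

/-- The exponential `e₋₁(ζ) = ζ̄` as an element of `L∞`. -/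
def eneg1 : Linf := fourierLp ⊤ (-1)

/-- The operator `Q : H²₋ → H²₋`, `Q g = P₋(e₁ g)`. -/
def Qop : Hminus →L[ℂ] Hminus :=
  Hminus.orthogonalProjectionOnto ∘L Mmul e1 ∘L Hminus.subtypeL

/-- `u(0)`, the 0-th Fourier coefficient. -/
def coef0 (u : Linf) : ℂ := fourierCoeff (⇑u) 0

/-- Minimum modulus of a bounded operator. -/
def minMod {E F : Type*} [NormedAddCommGroup E] [NormedSpace ℂ E]
    [NormedAddCommGroup F] [NormedSpace ℂ F] (T : E →L[ℂ] F) : ℝ :=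
  ⨅ x : {x : E // ‖x‖ = 1}, ‖T x.1‖

/-- Complex conjugation on `L∞`. -/
lemma memLinf_star (φ : Linf) : MemLp (fun z => (starRingEnd ℂ) (φ z)) ⊤ μT := by
  refine ⟨continuous_star.comp_aestronglyMeasurable (Lp.aestronglyMeasurable φ), ?_⟩
  rw [eLpNorm_congr_norm_ae (g := ⇑φ) (Filter.Eventually.of_forall fun z => norm_star _)]
  exact Lp.eLpNorm_lt_top φ

/-- The complex conjugate `φ̄ ∈ L∞` of `φ ∈ L∞`. -/
def conjL (φ : Linf) : Linf := (memLinf_star φ).toLp _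

lemma memLinf_mul (φ ψ : Linf) : MemLp (⇑φ • ⇑ψ) ⊤ μT :=
  (Lp.memLp ψ).smul (Lp.memLp φ)

/-- The pointwise product of two elements of `L∞`. -/
def mulL (φ ψ : Linf) : Linf := (memLinf_mul φ ψ).toLp _

end DTTO

namespace DTTO

lemma inner_fourierLp_eq_zero {m n : ℤ} (h : m ≠ n) :
    (inner ℂ (fourierLp 2 m : L2) (fourierLp 2 n : L2) : ℂ) = 0 := by
  have hcoe := congrFun (coe_fourierBasis (T := 2 * Real.pi))
  have h2 := (fourierBasis (T := 2 * Real.pi)).orthonormal.2 (i := m) (j := n) h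
  simpa only [hcoe] using h2

lemma span_le_orth_em1 :
    Submodule.span ℂ (Set.range fun n : ℕ => (fourierLp 2 (n : ℤ) : L2))
      ≤ (ℂ ∙ (fourierLp 2 (-1) : L2))ᗮ := by
  rw [Submodule.span_le]
  rintro x ⟨n, rfl⟩
  rw [SetLike.mem_coe, Submodule.mem_orthogonal]
  intro w hw
  obtain ⟨c, rfl⟩ := Submodule.mem_span_singleton.1 hw
  rw [inner_smul_left, inner_fourierLp_eq_zero (by omega : (-1 : ℤ) ≠ (n : ℤ)), mul_zero]

lemma H2_le_orth_em1 : H2 ≤ (ℂ ∙ (fourierLp 2 (-1) : L2))ᗮ :=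
  Submodule.topologicalClosure_minimal _ span_le_orth_em1 (Submodule.isClosed_orthogonal _)

/-- `e₋₁ ∈ H²₋`. -/
lemma em1_mem : (fourierLp 2 (-1) : L2) ∈ Hminus := by
  unfold Hminus
  rw [Submodule.mem_orthogonal]
  intro v hv
  have h := H2_le_orth_em1 hv
  rw [Submodule.mem_orthogonal] at h
  exact inner_eq_zero_symm.mp (h _ (Submodule.mem_span_singleton_self _))

/-- `e₋₁` as an element of `H²₋`. -/
def em1 : Hminus := ⟨(fourierLp 2 (-1) : L2), em1_mem⟩

/-- For `f ∈ K_u`, the function `u f ∈ uH² ⊆ K_u^⊥`. -/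
lemma mul_mem_KuP (u : Linf) (f : Ku u) : Mmul u (f : L2) ∈ KuP u := by
  unfold KuP
  rw [Submodule.mem_orthogonal]
  intro v hv
  have hv2 : v ∈ (uH2 u)ᗮ := (Submodule.mem_inf.1 hv).2
  have hm : Mmul u (f : L2) ∈ uH2 u :=
    Submodule.mem_map_of_mem (Submodule.mem_inf.1 f.2).1
  rw [Submodule.mem_orthogonal] at hv2
  exact inner_eq_zero_symm.mp (hv2 _ hm)

lemma Ku_le_H2 (u : Linf) : Ku u ≤ H2 := inf_le_left

/-- The inclusion `K_u ⊆ H²` as a continuous linear map. -/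
def KuIncl (u : Linf) : Ku u →L[ℂ] H2 :=
  LinearMap.mkContinuous (Submodule.inclusion (Ku_le_H2 u)) 1
    (fun f => by rw [one_mul]; exact le_of_eq rfl)

end DTTO

/-! Since `M_φ` is unitary, every `g ∈ K_u^⊥` splits as `‖g‖² = ‖P_{K_u}(φg)‖² + ‖D_φ g‖²`,
which gives `m(D_φ) = √(1 - ‖C_φ‖²)` for the compression `C_φ = P_{K_u} M_φ |_{K_u^⊥}`.
Its adjoint is `B_{φ̄} f = (I - P_{K_u})(φ̄ f)`, and the orthogonal decomposition
`K_u^⊥ = uH² ⊕ H²₋` gives `‖B_{φ̄} f‖² = ‖T_{\overline{uφ}} f‖² + ‖H_{φ̄} f‖²` for `f ∈ K_u`.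
In each of the three cases the norm of this Pythagorean sum is computable: one summand
vanishes identically (for `φ = ψ̄` with `ψ ∈ H∞` this is the Hankel part, as `ψ H² ⊆ H²`),
or both summands attain their norms at a common unit vector. -/

namespace DTTO

section MinimumModulus

variable {E F G H : Type*} [NormedAddCommGroup E] [NormedSpace ℂ E]
  [NormedAddCommGroup F] [NormedSpace ℂ F] [NormedAddCommGroup G] [NormedSpace ℂ G]
  [NormedAddCommGroup H] [NormedSpace ℂ H]

lemma minMod_le_norm_apply (T : E →L[ℂ] F) {x : E} (hx : ‖x‖ = 1) : minMod T ≤ ‖T x‖ :=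
  ciInf_le ⟨0, by rintro _ ⟨y, rfl⟩; exact norm_nonneg _⟩ (⟨x, hx⟩ : {x : E // ‖x‖ = 1})

lemma le_minMod [Nontrivial E] (T : E →L[ℂ] F) {c : ℝ} (h : ∀ x : E, ‖x‖ = 1 → c ≤ ‖T x‖) :
    c ≤ minMod T := by
  obtain ⟨x, hx⟩ := exists_norm_eq E zero_le_one
  have : Nonempty {x : E // ‖x‖ = 1} := ⟨⟨x, hx⟩⟩
  exact le_ciInf fun x => h x.1 x.2

theorem minMod_eq_sqrt_one_sub_opNorm_sq [Nontrivial E] (A : E →L[ℂ] F) (B : E →L[ℂ] G)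
    (h : ∀ x, ‖A x‖ ^ 2 + ‖B x‖ ^ 2 = ‖x‖ ^ 2) : minMod A = √(1 - ‖B‖ ^ 2) := by
  have hA : ∀ x : E, ‖x‖ = 1 → ‖A x‖ = √(1 - ‖B x‖ ^ 2) := fun x hx => by
    rw [← one_pow 2, ← hx, ← h x, add_sub_cancel_right, Real.sqrt_sq (norm_nonneg _)]
  obtain ⟨x₀, hx₀⟩ := exists_norm_eq E zero_le_one
  have hm₀ : 0 ≤ minMod A := le_minMod A fun x _ => norm_nonneg _
  have hm₁ : minMod A ≤ 1 := calc
    minMod A ≤ ‖A x₀‖ := minMod_le_norm_apply A hx₀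
    _ ≤ 1 := by rw [hA x₀ hx₀]; exact Real.sqrt_le_one.mpr (by nlinarith [norm_nonneg (B x₀)])
  apply le_antisymm
  · have hB : ‖B‖ ≤ √(1 - minMod A ^ 2) :=
      B.opNorm_le_of_unit_norm (Real.sqrt_nonneg _) fun x hx => by
        have hm := minMod_le_norm_apply A hx
        have hx2 := h x
        rw [hx] at hx2
        exact Real.le_sqrt_of_sq_le (by nlinarith [norm_nonneg (A x)])
    have hB2 := pow_le_pow_left₀ (norm_nonneg B) hB 2
    rw [Real.sq_sqrt (by nlinarith)] at hB2
    exact Real.le_sqrt_of_sq_le (by linarith)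
  · refine le_minMod A fun x hx => ?_
    rw [hA x hx]
    have hBx : ‖B x‖ ≤ ‖B‖ := by simpa [hx] using B.le_opNorm x
    exact Real.sqrt_le_sqrt (by nlinarith [norm_nonneg (B x)])

theorem opNorm_eq_of_norm_apply_sq_eq_add (A : E →L[ℂ] F) (S : E →L[ℂ] G) (T : E →L[ℂ] H)
    (h : ∀ x, ‖A x‖ ^ 2 = ‖S x‖ ^ 2 + ‖T x‖ ^ 2) (hT : T = 0) : ‖A‖ = ‖S‖ :=
  A.opNorm_ext S fun x => by
    simpa [hT, sq_eq_sq₀ (norm_nonneg _) (norm_nonneg _)] using h x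

theorem opNorm_sq_eq_add_of_norm_apply_sq_eq_add (A : E →L[ℂ] F) (S : E →L[ℂ] G)
    (T : E →L[ℂ] H) (h : ∀ x, ‖A x‖ ^ 2 = ‖S x‖ ^ 2 + ‖T x‖ ^ 2) {x₀ : E} (hx₀ : ‖x₀‖ = 1)
    (hS : ‖S x₀‖ = ‖S‖) (hT : ‖T x₀‖ = ‖T‖) : ‖A‖ ^ 2 = ‖S‖ ^ 2 + ‖T‖ ^ 2 := by
  apply le_antisymm
  · have hA : ‖A‖ ≤ √(‖S‖ ^ 2 + ‖T‖ ^ 2) :=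
      A.opNorm_le_of_unit_norm (Real.sqrt_nonneg _) fun x hx => by
        have hSx : ‖S x‖ ≤ ‖S‖ := by simpa [hx] using S.le_opNorm x
        have hTx : ‖T x‖ ≤ ‖T‖ := by simpa [hx] using T.le_opNorm x
        exact Real.le_sqrt_of_sq_le (by rw [h x]; gcongr)
    simpa [Real.sq_sqrt (by positivity : (0 : ℝ) ≤ ‖S‖ ^ 2 + ‖T‖ ^ 2)] using
      pow_le_pow_left₀ (norm_nonneg A) hA 2
  · have hAx : ‖A x₀‖ ≤ ‖A‖ := by simpa [hx₀] using A.le_opNorm x₀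
    rw [← hS, ← hT, ← h x₀]
    gcongr

end MinimumModulus

section Multiplication

lemma coeFn_Mmul (φ : Linf) (f : L2) : ⇑(Mmul φ f) =ᵐ[μT] ⇑φ • ⇑f :=
  MemLp.coeFn_toLp (memL2_smul φ f)

lemma coeFn_conjL (φ : Linf) : ⇑(conjL φ) =ᵐ[μT] fun z => (starRingEnd ℂ) (φ z) :=
  MemLp.coeFn_toLp _

lemma coeFn_mulL (φ ψ : Linf) : ⇑(mulL φ ψ) =ᵐ[μT] ⇑φ • ⇑ψ :=
  MemLp.coeFn_toLp _

lemma coeFn_toL2 (φ : Linf) : ⇑(toL2 φ) =ᵐ[μT] ⇑φ :=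
  MemLp.coeFn_toLp _

lemma conjL_conjL (φ : Linf) : conjL (conjL φ) = φ := by
  refine Lp.ext ?_
  filter_upwards [coeFn_conjL (conjL φ), coeFn_conjL φ] with z h₁ h₂
  rw [h₁, h₂, Complex.conj_conj]

lemma conjL_mulL (φ ψ : Linf) : conjL (mulL φ ψ) = mulL (conjL φ) (conjL ψ) := by
  refine Lp.ext ?_
  filter_upwards [coeFn_conjL (mulL φ ψ), coeFn_mulL φ ψ, coeFn_mulL (conjL φ) (conjL ψ),
    coeFn_conjL φ, coeFn_conjL ψ] with z h₁ h₂ h₃ h₄ h₅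
  simp only [h₁, h₂, h₃, smul_eq_mul, Pi.mul_apply, h₄, h₅, map_mul]

lemma norm_Mmul {φ : Linf} (hφ : ∀ᵐ z ∂μT, ‖φ z‖ = 1) (f : L2) : ‖Mmul φ f‖ = ‖f‖ := by
  have h : eLpNorm ⇑(Mmul φ f) 2 μT = eLpNorm ⇑f 2 μT := by
    refine (eLpNorm_congr_ae (coeFn_Mmul φ f)).trans (eLpNorm_congr_norm_ae ?_)
    filter_upwards [hφ] with z hz
    simp [hz]
  rw [Lp.norm_def, Lp.norm_def, h]

lemma inner_Mmul_left (φ : Linf) (f g : L2) :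
    ⟪Mmul φ f, g⟫_ℂ = ⟪f, Mmul (conjL φ) g⟫_ℂ := by
  rw [MeasureTheory.L2.inner_def, MeasureTheory.L2.inner_def]
  refine integral_congr_ae ?_
  filter_upwards [coeFn_Mmul φ f, coeFn_Mmul (conjL φ) g, coeFn_conjL φ] with z h₁ h₂ h₃
  simp only [h₁, h₂, h₃, smul_eq_mul, Pi.mul_apply, RCLike.inner_apply, map_mul]
  ring

lemma Mmul_Mmul (φ ψ : Linf) (f : L2) : Mmul φ (Mmul ψ f) = Mmul (mulL φ ψ) f := by
  refine Lp.ext ?_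
  filter_upwards [coeFn_Mmul φ (Mmul ψ f), coeFn_Mmul ψ f, coeFn_Mmul (mulL φ ψ) f,
    coeFn_mulL φ ψ] with z h₁ h₂ h₃ h₄
  simp only [h₁, h₂, h₃, h₄, smul_eq_mul, Pi.mul_apply]
  ring

lemma Mmul_conjL_Mmul {u : Linf} (hu : ∀ᵐ z ∂μT, ‖u z‖ = 1) (f : L2) :
    Mmul (conjL u) (Mmul u f) = f := by
  refine Lp.ext ?_
  filter_upwards [coeFn_Mmul (conjL u) (Mmul u f), coeFn_Mmul u f, coeFn_conjL u, hu]
    with z h₁ h₂ h₃ h₄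
  have hz : (starRingEnd ℂ) (u z) * u z = 1 := by
    rw [mul_comm, Complex.mul_conj, Complex.normSq_eq_norm_sq, h₄]
    norm_num
  simp only [h₁, h₂, h₃, smul_eq_mul, Pi.mul_apply, ← mul_assoc, hz, one_mul]

lemma Mmul_fourierLp (m n : ℤ) :
    Mmul (fourierLp ⊤ m) (fourierLp 2 n) = (fourierLp 2 (m + n) : L2) := by
  refine Lp.ext ?_
  filter_upwards [coeFn_Mmul (fourierLp ⊤ m) (fourierLp 2 n),
    coeFn_fourierLp ⊤ m, coeFn_fourierLp 2 n, coeFn_fourierLp 2 (m + n)] with z h₁ h₂ h₃ h₄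
  simp only [h₁, h₄, fourier_add, smul_eq_mul, Pi.mul_apply, h₂, h₃]

lemma Mmul_apply_fourierLp (ψ : Linf) (n : ℤ) :
    Mmul ψ (fourierLp 2 n) = Mmul (fourierLp ⊤ n) (toL2 ψ) := by
  refine Lp.ext ?_
  filter_upwards [coeFn_Mmul ψ (fourierLp 2 n), coeFn_Mmul (fourierLp ⊤ n) (toL2 ψ),
    coeFn_fourierLp ⊤ n, coeFn_fourierLp 2 n, coeFn_toL2 ψ] with z h₁ h₂ h₃ h₄ h₅
  simp only [h₁, h₂, smul_eq_mul, Pi.mul_apply, h₃, h₄, h₅]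
  ring

end Multiplication

section Hardy

lemma fourierLp_mem_H2 (n : ℕ) : (fourierLp 2 (n : ℤ) : L2) ∈ H2 :=
  Submodule.le_topologicalClosure _ (Submodule.subset_span ⟨n, rfl⟩)

lemma map_mem_H2_of_fourierLp (T : L2 →L[ℂ] L2)
    (h : ∀ n : ℕ, T (fourierLp 2 (n : ℤ)) ∈ H2) {f : L2} (hf : f ∈ H2) : T f ∈ H2 := by
  have hspan : Submodule.span ℂ (Set.range fun n : ℕ => (fourierLp 2 (n : ℤ) : L2))
      ≤ H2.comap (T : L2 →ₗ[ℂ] L2) := by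
    rw [Submodule.span_le]
    rintro _ ⟨n, rfl⟩
    exact h n
  exact Submodule.topologicalClosure_minimal _ hspan
    ((Submodule.isClosed_topologicalClosure _).preimage T.continuous) hf

lemma Mmul_fourierLp_mem_H2 (n : ℕ) {f : L2} (hf : f ∈ H2) :
    Mmul (fourierLp ⊤ (n : ℤ)) f ∈ H2 := by
  refine map_mem_H2_of_fourierLp _ (fun m => ?_) hf
  rw [Mmul_fourierLp, ← Nat.cast_add]
  exact fourierLp_mem_H2 _

lemma Mmul_mem_H2 {ψ : Linf} (hψ : MemHinf ψ) {f : L2} (hf : f ∈ H2) : Mmul ψ f ∈ H2 :=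
  map_mem_H2_of_fourierLp _ (fun n => by
    rw [Mmul_apply_fourierLp]
    exact Mmul_fourierLp_mem_H2 n hψ) hf

lemma Hop_eq_zero_of_memHinf {ψ : Linf} (hψ : MemHinf ψ) : Hop ψ = 0 := by
  ext f : 1
  rw [zero_apply, Hop, ContinuousLinearMap.comp_apply,
    ContinuousLinearMap.comp_apply, Submodule.orthogonalProjectionOnto_eq_zero_iff, Hminus]
  exact Submodule.le_orthogonal_orthogonal H2 (Mmul_mem_H2 hψ f.2)

end Hardy

section ModelSpace

variable {u : Linf}

lemma Hminus_le_KuP (u : Linf) : Hminus ≤ KuP u :=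
  Submodule.orthogonal_le (Ku_le_H2 u)

lemma Mmul_mem_KuP {f : L2} (hf : f ∈ H2) : Mmul u f ∈ KuP u :=
  (Submodule.le_orthogonal_orthogonal _).trans (Submodule.orthogonal_le inf_le_right)
    (Submodule.mem_map_of_mem hf)

-- The first summand `u P(ū y)` is the projection of `y` onto `uH²`.
lemma starProjection_KuP (hu : IsInnerFn u) (y : L2) :
    (KuP u).starProjection y
      = Mmul u (H2.starProjection (Mmul (conjL u) y)) + Hminus.starProjection y := by
  set g := H2.starProjection (Mmul (conjL u) y)
  have hg : g ∈ H2 := H2.starProjection_apply_mem _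
  have hy : y - Hminus.starProjection y ∈ H2 := by
    simpa only [Hminus, Submodule.orthogonal_orthogonal] using
      Hminus.sub_starProjection_mem_orthogonal y
  refine Submodule.eq_starProjection_of_mem_orthogonal
    ((KuP u).add_mem (Mmul_mem_KuP hg) (Hminus_le_KuP u (Hminus.starProjection_apply_mem y))) ?_
  rw [KuP, Submodule.orthogonal_orthogonal]
  refine Submodule.mem_inf.2 ⟨?_, ?_⟩
  · rw [show y - (Mmul u g + Hminus.starProjection y)
        = (y - Hminus.starProjection y) - Mmul u g by abel]
    exact H2.sub_mem hy (Mmul_mem_H2 hu.memH2 hg)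
  · rw [Submodule.mem_orthogonal]
    rintro _ ⟨h, hh, rfl⟩
    change ⟪Mmul u h, _⟫_ℂ = 0
    have h₁ : ⟪Mmul u h, y - Mmul u g⟫_ℂ = 0 := by
      rw [inner_Mmul_left, map_sub, Mmul_conjL_Mmul hu.unimod]
      exact Submodule.inner_right_of_mem_orthogonal hh (H2.sub_starProjection_mem_orthogonal _)
    have h₂ : ⟪Mmul u h, Hminus.starProjection y⟫_ℂ = 0 :=
      Submodule.inner_right_of_mem_orthogonal (Mmul_mem_H2 hu.memH2 hh)
        (Hminus.starProjection_apply_mem y)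
    rw [show y - (Mmul u g + Hminus.starProjection y)
        = (y - Mmul u g) - Hminus.starProjection y by abel, inner_sub_right, h₁, h₂, sub_zero]

lemma norm_starProjection_KuP_sq (hu : IsInnerFn u) (y : L2) :
    ‖(KuP u).starProjection y‖ ^ 2
      = ‖H2.starProjection (Mmul (conjL u) y)‖ ^ 2 + ‖Hminus.starProjection y‖ ^ 2 := by
  rw [starProjection_KuP hu, ← norm_Mmul hu.unimod (H2.starProjection _), sq, sq, sq]
  exact norm_add_sq_eq_norm_sq_add_norm_sq_of_inner_eq_zero _ _
    (Submodule.inner_right_of_mem_orthogonal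
      (Mmul_mem_H2 hu.memH2 (H2.starProjection_apply_mem _)) (Hminus.starProjection_apply_mem y))

end ModelSpace

section Operators

variable {u φ : Linf}

def Cop (u φ : Linf) : KuP u →L[ℂ] Ku u :=
  (Ku u).orthogonalProjectionOnto ∘L Mmul φ ∘L (KuP u).subtypeL

lemma norm_Cop_sq_add_norm_Dop_sq (hφ : ∀ᵐ z ∂μT, ‖φ z‖ = 1) (g : KuP u) :
    ‖Cop u φ g‖ ^ 2 + ‖Dop u φ g‖ ^ 2 = ‖g‖ ^ 2 := by
  rw [show ‖g‖ = ‖Mmul φ g‖ from (norm_Mmul hφ _).symm]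
  exact ((Ku u).norm_sq_eq_add_norm_sq_projection (Mmul φ g)).symm

lemma adjoint_Cop (u φ : Linf) : (Cop u φ).adjoint = Bop u (conjL φ) := by
  refine ((ContinuousLinearMap.eq_adjoint_iff _ _).2 fun f g => ?_).symm
  have hB : ⟪Bop u (conjL φ) f, g⟫_ℂ = ⟪Mmul (conjL φ) f, (g : L2)⟫_ℂ :=
    Submodule.inner_orthogonalProjectionOnto_eq_of_mem_right g _
  have hC : ⟪f, Cop u φ g⟫_ℂ = ⟪(f : L2), Mmul φ g⟫_ℂ :=
    Submodule.inner_orthogonalProjectionOnto_eq_of_mem_left f _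
  rw [hB, hC, inner_Mmul_left, conjL_conjL]

lemma norm_Cop (u φ : Linf) : ‖Cop u φ‖ = ‖Bop u (conjL φ)‖ := by
  rw [← adjoint_Cop, ContinuousLinearMap.adjoint.norm_map]

lemma norm_fourierLp (n : ℤ) : ‖(fourierLp 2 n : L2)‖ = 1 := by
  simpa only [coe_fourierBasis] using (fourierBasis (T := 2 * Real.pi)).orthonormal.1 n

instance (u : Linf) : Nontrivial (KuP u) :=
  nontrivial_of_ne ⟨_, Hminus_le_KuP u em1_mem⟩ 0 fun h => by
    simpa [norm_fourierLp] using congrArg (fun x : KuP u => ‖(x : L2)‖) h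

lemma minMod_Dop (hφ : ∀ᵐ z ∂μT, ‖φ z‖ = 1) :
    minMod (Dop u φ) = √(1 - ‖Bop u (conjL φ)‖ ^ 2) := by
  rw [← norm_Cop]
  exact minMod_eq_sqrt_one_sub_opNorm_sq _ _ fun g => by
    rw [add_comm, norm_Cop_sq_add_norm_Dop_sq hφ]

lemma norm_Bop_conjL_sq (hu : IsInnerFn u) (f : Ku u) :
    ‖Bop u (conjL φ) f‖ ^ 2 = ‖(Top (conjL (mulL u φ)) ∘L KuIncl u) f‖ ^ 2
      + ‖(Hop (conjL φ) ∘L KuIncl u) f‖ ^ 2 := by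
  have := norm_starProjection_KuP_sq hu (Mmul (conjL φ) f)
  rwa [Mmul_Mmul, ← conjL_mulL] at this

end Operators

theorem minMod_Dphi_special_cases_general (u φ : Linf) (hu : IsInnerFn u)
    (hmod : ∀ᵐ z ∂μT, ‖φ z‖ = 1) :
    (∀ ψ : Linf, MemHinf ψ → φ = conjL ψ →
        minMod (Dop u φ)
          = Real.sqrt (1 - ‖Top (mulL (conjL u) ψ) ∘L KuIncl u‖ ^ 2))
    ∧ ((∀ f : Ku u, Top (conjL (mulL u φ)) (KuIncl u f) = 0) →
        minMod (Dop u φ) = Real.sqrt (1 - ‖Hop (conjL φ) ∘L KuIncl u‖ ^ 2))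
    ∧ ((∃ f₀ : Ku u, ‖f₀‖ = 1
          ∧ ‖Top (conjL (mulL u φ)) (KuIncl u f₀)‖
              = ‖Top (conjL (mulL u φ)) ∘L KuIncl u‖
          ∧ ‖Hop (conjL φ) (KuIncl u f₀)‖ = ‖Hop (conjL φ) ∘L KuIncl u‖) →
        minMod (Dop u φ)
          = Real.sqrt (1 - (‖Top (conjL (mulL u φ)) ∘L KuIncl u‖ ^ 2
              + ‖Hop (conjL φ) ∘L KuIncl u‖ ^ 2))) := by
  have hB := norm_Bop_conjL_sq (φ := φ) hu
  rw [minMod_Dop hmod]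
  refine ⟨fun ψ hψ hφ => ?_, fun hT => ?_, fun ⟨f₀, hf₀, hT, hH⟩ => ?_⟩
  · subst hφ
    simp only [conjL_mulL, conjL_conjL] at hB ⊢
    rw [opNorm_eq_of_norm_apply_sq_eq_add _ _ _ hB (by
      rw [Hop_eq_zero_of_memHinf hψ, ContinuousLinearMap.zero_comp])]
  · have hT₀ : Top (conjL (mulL u φ)) ∘L KuIncl u = 0 := ContinuousLinearMap.ext hT
    rw [opNorm_eq_of_norm_apply_sq_eq_add _ _ _ (fun f => (hB f).trans (add_comm _ _)) hT₀]
  · rw [opNorm_sq_eq_add_of_norm_apply_sq_eq_add _ _ _ hB hf₀ hT hH]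

/-- Special cases where the bounds for `m(D_φ)` (unimodular `φ`) become exact
equalities. -/
theorem minMod_Dphi_special_cases (u φ : Linf) (hu : IsInnerFn u)
    (hnc : Nonconst u) (hmod : ∀ᵐ z ∂μT, ‖φ z‖ = 1) :
    (∀ ψ : Linf, MemHinf ψ → φ = conjL ψ →
        minMod (Dop u φ)
          = Real.sqrt (1 - ‖Top (mulL (conjL u) ψ) ∘L KuIncl u‖ ^ 2))
    ∧ ((∀ f : Ku u, Top (conjL (mulL u φ)) (KuIncl u f) = 0) →
        minMod (Dop u φ) = Real.sqrt (1 - ‖Hop (conjL φ) ∘L KuIncl u‖ ^ 2))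
    ∧ ((∃ f₀ : Ku u, ‖f₀‖ = 1
          ∧ ‖Top (conjL (mulL u φ)) (KuIncl u f₀)‖
              = ‖Top (conjL (mulL u φ)) ∘L KuIncl u‖
          ∧ ‖Hop (conjL φ) (KuIncl u f₀)‖ = ‖Hop (conjL φ) ∘L KuIncl u‖) →
        minMod (Dop u φ)
          = Real.sqrt (1 - (‖Top (conjL (mulL u φ)) ∘L KuIncl u‖ ^ 2
              + ‖Hop (conjL φ) ∘L KuIncl u‖ ^ 2))) :=
  minMod_Dphi_special_cases_general u φ hu hmod

end DTTO
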